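/- arXiv:2511.01847 — 5 statements merged into one kernel-verified Lean document; each statement's English description precedes it below -/
import Mathlib

section
/- For any vector x ∈ ℝ^d, any matrix U ∈ ℝ^{d×n}, and any λ > 0, the matrix UUᵀ + λI_d is invertible and xᵀ(UUᵀ + λI_d)⁻¹x = min_{z ∈ ℝⁿ} [ (1/λ)·‖x − Uz‖² + ‖z‖² ], with the minimum attained at z* = (λI_n + UᵀU)⁻¹Uᵀx. -/
open Matrix

/-!
Put `z₀ = (λI + UᵀU)⁻¹Uᵀx` and `r = x - Uz₀`. Everything follows from the normal equation
`Uᵀr = λz₀`: it gives `(UUᵀ + λI) r = U(λz₀) + λ(x - Uz₀) = λx`, so `xᵀ(UUᵀ + λI)⁻¹x = xᵀr / λ`;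
and expanding the objective `f` around `z₀`, the cross terms cancel, leaving
`f(z₀ + h) = f(z₀) + ‖Uh‖² / λ + ‖h‖²` with `f(z₀) = (rᵀr + λz₀ᵀz₀) / λ = xᵀr / λ`.
Both `λI + UᵀU` and `UUᵀ + λI` are positive definite, hence invertible.
-/

variable {m n : Type*} [Fintype m] [Fintype n]

lemma posDef_smul_one_add_transpose_mul_self [DecidableEq n] (U : Matrix m n ℝ) {lam : ℝ}
    (hlam : 0 < lam) : (lam • (1 : Matrix n n ℝ) + Uᵀ * U).PosDef :=
  (PosDef.one.smul hlam).add_posSemidef <| by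
    simpa [conjTranspose_eq_transpose_of_trivial] using posSemidef_conjTranspose_mul_self U

lemma posDef_mul_transpose_add_smul_one [DecidableEq m] (U : Matrix m n ℝ) {lam : ℝ}
    (hlam : 0 < lam) : (U * Uᵀ + lam • (1 : Matrix m m ℝ)).PosDef := by
  simpa [add_comm] using posDef_smul_one_add_transpose_mul_self Uᵀ hlam

noncomputable def ridgeSolution [DecidableEq n] (U : Matrix m n ℝ) (lam : ℝ) (x : m → ℝ) :
    n → ℝ :=
  (lam • (1 : Matrix n n ℝ) + Uᵀ * U)⁻¹ *ᵥ (Uᵀ *ᵥ x)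

noncomputable def ridgeObjective (U : Matrix m n ℝ) (lam : ℝ) (x : m → ℝ) (z : n → ℝ) : ℝ :=
  (1 / lam) * (∑ i, (x - U *ᵥ z) i ^ 2) + ∑ j, z j ^ 2

lemma sum_sq_eq_dotProduct_self {ι : Type*} [Fintype ι] (v : ι → ℝ) : ∑ i, v i ^ 2 = v ⬝ᵥ v := by
  simp only [dotProduct, sq]

lemma dotProduct_self_nonneg {R ι : Type*} [Ring R] [LinearOrder R] [IsStrictOrderedRing R]
    [Fintype ι] (v : ι → R) : 0 ≤ v ⬝ᵥ v :=
  Finset.sum_nonneg fun i _ => mul_self_nonneg (v i)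

lemma ridgeObjective_eq_dotProduct (U : Matrix m n ℝ) (lam : ℝ) (x : m → ℝ) (z : n → ℝ) :
    ridgeObjective U lam x z = (1 / lam) * ((x - U *ᵥ z) ⬝ᵥ (x - U *ᵥ z)) + z ⬝ᵥ z := by
  simp only [ridgeObjective, sum_sq_eq_dotProduct_self]

lemma transpose_mulVec_sub_mulVec_ridgeSolution [DecidableEq n] {U : Matrix m n ℝ} {lam : ℝ}
    (hB : IsUnit (lam • (1 : Matrix n n ℝ) + Uᵀ * U)) (x : m → ℝ) :
    Uᵀ *ᵥ (x - U *ᵥ ridgeSolution U lam x) = lam • ridgeSolution U lam x := by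
  have hsol : (lam • (1 : Matrix n n ℝ) + Uᵀ * U) *ᵥ ridgeSolution U lam x = Uᵀ *ᵥ x := by
    rw [ridgeSolution, mulVec_mulVec, mul_nonsing_inv _ ((isUnit_iff_isUnit_det _).1 hB),
      one_mulVec]
  rw [add_mulVec, smul_mulVec, one_mulVec, ← mulVec_mulVec] at hsol
  rw [mulVec_sub, ← hsol, add_sub_cancel_right]

section NormalEquation

variable {U : Matrix m n ℝ} {lam : ℝ} {x : m → ℝ} {z₀ : n → ℝ}

lemma mul_transpose_add_smul_one_mulVec_sub_mulVec [DecidableEq m]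
    (hz₀ : Uᵀ *ᵥ (x - U *ᵥ z₀) = lam • z₀) :
    (U * Uᵀ + lam • (1 : Matrix m m ℝ)) *ᵥ (x - U *ᵥ z₀) = lam • x := by
  rw [add_mulVec, ← mulVec_mulVec, hz₀, smul_mulVec, one_mulVec, mulVec_smul, smul_sub,
    add_sub_cancel]

lemma sub_mulVec_dotProduct_mulVec_of_normal_eq (hz₀ : Uᵀ *ᵥ (x - U *ᵥ z₀) = lam • z₀)
    (h : n → ℝ) :
    (x - U *ᵥ z₀) ⬝ᵥ (U *ᵥ h) = lam * (z₀ ⬝ᵥ h) := by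
  rw [dotProduct_mulVec, ← mulVec_transpose, hz₀, smul_dotProduct, smul_eq_mul]

lemma ridgeObjective_eq_of_normal_eq (hz₀ : Uᵀ *ᵥ (x - U *ᵥ z₀) = lam • z₀) (hlam : lam ≠ 0) :
    ridgeObjective U lam x z₀ = (1 / lam) * (x ⬝ᵥ (x - U *ᵥ z₀)) := by
  have hcross := sub_mulVec_dotProduct_mulVec_of_normal_eq hz₀ z₀
  have hres_sq : (x - U *ᵥ z₀) ⬝ᵥ (x - U *ᵥ z₀) = x ⬝ᵥ (x - U *ᵥ z₀) - lam * (z₀ ⬝ᵥ z₀) := by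
    rw [sub_dotProduct x, dotProduct_comm (U *ᵥ z₀), hcross]
  rw [ridgeObjective_eq_dotProduct, hres_sq]
  field_simp
  ring

lemma ridgeObjective_add_eq_of_normal_eq (hz₀ : Uᵀ *ᵥ (x - U *ᵥ z₀) = lam • z₀) (hlam : lam ≠ 0)
    (h : n → ℝ) :
    ridgeObjective U lam x (z₀ + h) = ridgeObjective U lam x z₀ +
      ((1 / lam) * ((U *ᵥ h) ⬝ᵥ (U *ᵥ h)) + h ⬝ᵥ h) := by
  have hcross : (1 / lam) * ((x - U *ᵥ z₀) ⬝ᵥ (U *ᵥ h)) = z₀ ⬝ᵥ h := by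
    rw [sub_mulVec_dotProduct_mulVec_of_normal_eq hz₀]
    field_simp
  have hres : x - U *ᵥ (z₀ + h) = (x - U *ᵥ z₀) - U *ᵥ h := by rw [mulVec_add]; abel
  rw [ridgeObjective_eq_dotProduct, ridgeObjective_eq_dotProduct, hres]
  generalize x - U *ᵥ z₀ = r at hcross ⊢
  simp only [dotProduct_sub, sub_dotProduct, dotProduct_add, add_dotProduct]
  linear_combination (-2) * hcross - (1 / lam) * dotProduct_comm (U *ᵥ h) r
    + dotProduct_comm h z₀

lemma ridgeObjective_le_of_normal_eq (hz₀ : Uᵀ *ᵥ (x - U *ᵥ z₀) = lam • z₀) (hlam : 0 < lam)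
    (z : n → ℝ) : ridgeObjective U lam x z₀ ≤ ridgeObjective U lam x z := by
  rw [← add_sub_cancel z₀ z, ridgeObjective_add_eq_of_normal_eq hz₀ hlam.ne']
  exact le_add_of_nonneg_right <|
    add_nonneg (mul_nonneg (by positivity) (dotProduct_self_nonneg _)) (dotProduct_self_nonneg _)

lemma dotProduct_inv_mulVec_eq_ridgeObjective [DecidableEq m]
    (hA : IsUnit (U * Uᵀ + lam • (1 : Matrix m m ℝ))) (hz₀ : Uᵀ *ᵥ (x - U *ᵥ z₀) = lam • z₀)
    (hlam : lam ≠ 0) :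
    x ⬝ᵥ ((U * Uᵀ + lam • (1 : Matrix m m ℝ))⁻¹ *ᵥ x) = ridgeObjective U lam x z₀ := by
  have := hA.invertible
  have hinv : (U * Uᵀ + lam • (1 : Matrix m m ℝ))⁻¹ *ᵥ x = (1 / lam) • (x - U *ᵥ z₀) := by
    refine inv_mulVec_eq_vec ?_
    rw [mulVec_smul, mul_transpose_add_smul_one_mulVec_sub_mulVec hz₀, smul_smul,
      one_div_mul_cancel hlam, one_smul]
  rw [hinv, dotProduct_smul, smul_eq_mul, ridgeObjective_eq_of_normal_eq hz₀ hlam]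

end NormalEquation

/-- For any `x ∈ ℝ^d`, `U ∈ ℝ^{d×n}` and `λ > 0`, the matrix `UUᵀ + λ I_d` is invertible and
`xᵀ(UUᵀ + λI)⁻¹x = min_{z ∈ ℝⁿ} (1/λ)‖x − Uz‖² + ‖z‖²`, attained at
`z* = (λ I_n + UᵀU)⁻¹ Uᵀ x`. -/
theorem ridge_woodbury_identity (d n : ℕ) (x : Fin d → ℝ) (U : Matrix (Fin d) (Fin n) ℝ)
    (lam : ℝ) (hlam : 0 < lam) :
    IsUnit (U * Uᵀ + lam • (1 : Matrix (Fin d) (Fin d) ℝ)) ∧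
    x ⬝ᵥ ((U * Uᵀ + lam • (1 : Matrix (Fin d) (Fin d) ℝ))⁻¹ *ᵥ x) =
      (1 / lam) *
          (∑ i, (x - U *ᵥ ((lam • (1 : Matrix (Fin n) (Fin n) ℝ) + Uᵀ * U)⁻¹ *ᵥ (Uᵀ *ᵥ x))) i ^ 2)
        + ∑ j, ((lam • (1 : Matrix (Fin n) (Fin n) ℝ) + Uᵀ * U)⁻¹ *ᵥ (Uᵀ *ᵥ x)) j ^ 2 ∧
    ∀ z : Fin n → ℝ,
      x ⬝ᵥ ((U * Uᵀ + lam • (1 : Matrix (Fin d) (Fin d) ℝ))⁻¹ *ᵥ x) ≤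
        (1 / lam) * (∑ i, (x - U *ᵥ z) i ^ 2) + ∑ j, z j ^ 2 := by
  have hA := (posDef_mul_transpose_add_smul_one U hlam).isUnit
  have hz₀ := transpose_mulVec_sub_mulVec_ridgeSolution
    (posDef_smul_one_add_transpose_mul_self U hlam).isUnit x
  have hval := dotProduct_inv_mulVec_eq_ridgeObjective hA hz₀ hlam.ne'
  exact ⟨hA, hval, fun z => hval ▸ ridgeObjective_le_of_normal_eq hz₀ hlam z⟩
end

section
/- Let B ∈ ℝ^{d×k} satisfy BᵀB = I_k (orthonormal columns), and let 0 ≤ b̲ ≤ b̄ ≤ 1. Let u ∈ ℝ^d with b̲ ≤ ‖u‖ ≤ b̄. Then the infimum over all w ∈ ℝ^k with b̲ ≤ ‖w‖ ≤ b̄ of ‖Bw − u‖ is at most 2·‖u − BBᵀu‖ (i.e., at most twice the norm of the projection of u onto the orthogonal complement of the column span of B). -/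
open Matrix

/-- Euclidean norm of a vector in `ℝ^m`. -/
noncomputable def l2norm {m : ℕ} (v : Fin m → ℝ) : ℝ := Real.sqrt (∑ i, v i ^ 2)

lemma l2norm_nonneg {m : ℕ} (v : Fin m → ℝ) : 0 ≤ l2norm v := Real.sqrt_nonneg _

lemma l2norm_eq_sqrt_dot {m : ℕ} (v : Fin m → ℝ) : l2norm v = Real.sqrt (v ⬝ᵥ v) := by
  simp [l2norm, dotProduct, pow_two]

lemma dot_self_nonneg' {m : ℕ} (v : Fin m → ℝ) : 0 ≤ v ⬝ᵥ v :=
  Finset.sum_nonneg fun i _ => mul_self_nonneg _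

lemma l2norm_smul {m : ℕ} (c : ℝ) (v : Fin m → ℝ) : l2norm (c • v) = |c| * l2norm v := by
  simp only [l2norm, Pi.smul_apply, smul_eq_mul, mul_pow]
  rw [← Finset.mul_sum, Real.sqrt_mul (sq_nonneg c), Real.sqrt_sq_eq_abs]

lemma l2norm_eq_norm {m : ℕ} (v : Fin m → ℝ) :
    l2norm v = ‖(WithLp.equiv 2 (Fin m → ℝ)).symm v‖ := by
  rw [EuclideanSpace.norm_eq]
  simp [l2norm, Real.norm_eq_abs, sq_abs]

lemma l2norm_triangle {m : ℕ} (x y : Fin m → ℝ) :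
    l2norm (x + y) ≤ l2norm x + l2norm y := by
  simp only [l2norm_eq_norm]
  rw [show (WithLp.equiv 2 (Fin m → ℝ)).symm (x + y)
      = (WithLp.equiv 2 (Fin m → ℝ)).symm x + (WithLp.equiv 2 (Fin m → ℝ)).symm y from rfl]
  exact norm_add_le _ _

lemma l2norm_neg {m : ℕ} (v : Fin m → ℝ) : l2norm (-v) = l2norm v := by
  simp [l2norm]

lemma l2norm_sub_comm {m : ℕ} (x y : Fin m → ℝ) : l2norm (x - y) = l2norm (y - x) := by
  rw [← l2norm_neg (y - x), neg_sub]

lemma l2norm_eq_zero_iff {m : ℕ} (v : Fin m → ℝ) : l2norm v = 0 ↔ v = 0 := by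
  rw [l2norm_eq_norm, norm_eq_zero]
  exact ⟨fun h => by simpa using congrArg (WithLp.equiv 2 (Fin m → ℝ)) h, fun h => by rw [h]; rfl⟩

lemma l2norm_single {m : ℕ} (i : Fin m) (a : ℝ) (ha : 0 ≤ a) :
    l2norm (Pi.single i a) = a := by
  have : ∀ j, ((Pi.single i a : Fin m → ℝ) j) ^ 2 = if j = i then a ^ 2 else 0 := by
    intro j
    by_cases h : j = i <;> simp [Pi.single_apply, h]
  simp only [l2norm, this, Finset.sum_ite_eq', Finset.mem_univ, if_true]
  exact Real.sqrt_sq ha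

/-- If `B` has orthonormal columns (`BᵀB = I_k`), `0 ≤ b̲ ≤ b̄ ≤ 1` and `b̲ ≤ ‖u‖ ≤ b̄`, then
the infimum over `w` with `b̲ ≤ ‖w‖ ≤ b̄` of `‖Bw − u‖` is at most `2‖u − BBᵀu‖`, i.e. at most
twice the norm of the projection of `u` onto the orthogonal complement of the span of `B`. -/
theorem subspace_distance_constrained (d k : ℕ) (B : Matrix (Fin d) (Fin k) ℝ)
    (hB : Bᵀ * B = 1) (blo bhi : ℝ) (hblo : 0 ≤ blo) (hlohi : blo ≤ bhi) (hbhi : bhi ≤ 1)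
    (u : Fin d → ℝ) (hu1 : blo ≤ l2norm u) (hu2 : l2norm u ≤ bhi) :
    sInf {r : ℝ | ∃ w : Fin k → ℝ, blo ≤ l2norm w ∧ l2norm w ≤ bhi ∧ r = l2norm (B *ᵥ w - u)}
      ≤ 2 * l2norm (u - B *ᵥ (Bᵀ *ᵥ u)) := by
  set S := {r : ℝ | ∃ w : Fin k → ℝ, blo ≤ l2norm w ∧ l2norm w ≤ bhi ∧ r = l2norm (B *ᵥ w - u)}
    with hS
  set v : Fin k → ℝ := Bᵀ *ᵥ u with hv
  set p : Fin d → ℝ := B *ᵥ v with hp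
  have hbdd : BddBelow S := ⟨0, fun r hr => by
    obtain ⟨w, _, _, rfl⟩ := hr; exact l2norm_nonneg _⟩
  have hRHS0 : 0 ≤ l2norm (u - p) := l2norm_nonneg _
  -- isometry of B
  have hBiso : ∀ w : Fin k → ℝ, l2norm (B *ᵥ w) = l2norm w := by
    intro w
    rw [l2norm_eq_sqrt_dot, l2norm_eq_sqrt_dot, Matrix.dotProduct_mulVec,
      ← Matrix.mulVec_transpose, Matrix.mulVec_mulVec, hB, Matrix.one_mulVec]
  -- orthogonality
  have horth : Bᵀ *ᵥ (u - p) = 0 := by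
    rw [hp, hv, Matrix.mulVec_sub, Matrix.mulVec_mulVec, hB, Matrix.one_mulVec, sub_self]
  have hcross : ∀ w : Fin k → ℝ, (B *ᵥ w) ⬝ᵥ (u - p) = 0 := by
    intro w
    rw [dotProduct_comm, Matrix.dotProduct_mulVec, ← Matrix.mulVec_transpose, horth,
      zero_dotProduct]
  -- Pythagoras
  have hpy : u ⬝ᵥ u = p ⬝ᵥ p + (u - p) ⬝ᵥ (u - p) := by
    have h1 : p ⬝ᵥ (u - p) = 0 := hcross v
    have h2 : (u - p) ⬝ᵥ p = 0 := by rw [dotProduct_comm]; exact h1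
    calc u ⬝ᵥ u = (p + (u - p)) ⬝ᵥ (p + (u - p)) := by rw [add_sub_cancel]
      _ = p ⬝ᵥ p + (p ⬝ᵥ (u - p) + ((u - p) ⬝ᵥ p + (u - p) ⬝ᵥ (u - p))) := by
          rw [add_dotProduct, dotProduct_add, dotProduct_add]; ring
      _ = p ⬝ᵥ p + (u - p) ⬝ᵥ (u - p) := by rw [h1, h2]; ring
  have hple : l2norm p ≤ l2norm u := by
    rw [l2norm_eq_sqrt_dot, l2norm_eq_sqrt_dot]
    apply Real.sqrt_le_sqrt
    have := dot_self_nonneg' (u - p)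
    linarith [hpy]
  have hvp : l2norm v = l2norm p := (hBiso v).symm
  have hup : l2norm u ≤ l2norm v + l2norm (u - p) := by
    calc l2norm u = l2norm (p + (u - p)) := by rw [add_sub_cancel]
      _ ≤ l2norm p + l2norm (u - p) := l2norm_triangle _ _
      _ = l2norm v + l2norm (u - p) := by rw [hvp]
  by_cases hcase : blo ≤ l2norm v
  · -- take w = v
    have hmem : l2norm (B *ᵥ v - u) ∈ S := ⟨v, hcase, by rw [hvp]; exact le_trans hple hu2, rfl⟩
    calc sInf S ≤ l2norm (B *ᵥ v - u) := csInf_le hbdd hmem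
      _ = l2norm (u - p) := by rw [← hp, l2norm_sub_comm]
      _ ≤ 2 * l2norm (u - p) := by linarith
  · push_neg at hcase
    by_cases hv0 : v = 0
    · -- p = 0, blo > 0
      have hp0 : p = 0 := by rw [hp, hv0, Matrix.mulVec_zero]
      have hvz : l2norm v = 0 := (l2norm_eq_zero_iff v).mpr hv0
      have hblo_pos : 0 < blo := by linarith
      rcases Nat.eq_zero_or_pos k with hk | hk
      · -- S is empty
        have : S = ∅ := by
          ext r
          simp only [hS, Set.mem_setOf_eq, Set.mem_empty_iff_false, iff_false]
          rintro ⟨w, hw1, _, _⟩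
          have : w = 0 := by subst hk; ext i; exact absurd i.2 (Nat.not_lt_zero _)
          rw [this, (l2norm_eq_zero_iff 0).mpr rfl] at hw1
          linarith
        rw [this, Real.sInf_empty]
        linarith
      · -- take w = blo • e₀
        set i0 : Fin k := ⟨0, hk⟩
        set w : Fin k → ℝ := Pi.single i0 blo with hw
        have hwn : l2norm w = blo := l2norm_single i0 blo hblo
        have hmem : l2norm (B *ᵥ w - u) ∈ S := ⟨w, le_of_eq hwn.symm, by rw [hwn]; exact hlohi, rfl⟩
        have hbound : l2norm (B *ᵥ w - u) ≤ 2 * l2norm (u - p) := by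
          have h1 : l2norm (B *ᵥ w - u) ≤ l2norm (B *ᵥ w) + l2norm (-u) := by
            rw [sub_eq_add_neg]; exact l2norm_triangle _ _
          rw [hBiso w, hwn, l2norm_neg] at h1
          rw [hp0, sub_zero]
          linarith
        exact le_trans (csInf_le hbdd hmem) hbound
    · -- scale v up to norm blo
      have hvpos : 0 < l2norm v := by
        rcases lt_or_eq_of_le (l2norm_nonneg v) with h | h
        · exact h
        · exact absurd ((l2norm_eq_zero_iff v).mp h.symm) hv0
      set c : ℝ := blo / l2norm v with hc
      have hc1 : 1 ≤ c := (one_le_div hvpos).mpr (le_of_lt hcase)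
      set w : Fin k → ℝ := c • v with hw
      have hwn : l2norm w = blo := by
        rw [hw, l2norm_smul, abs_of_nonneg (by positivity), hc,
          div_mul_cancel₀ _ (ne_of_gt hvpos)]
      have hmem : l2norm (B *ᵥ w - u) ∈ S := ⟨w, le_of_eq hwn.symm, by rw [hwn]; exact hlohi, rfl⟩
      have hwv : l2norm (w - v) = blo - l2norm v := by
        have : w - v = (c - 1) • v := by rw [hw, sub_smul, one_smul]
        rw [this, l2norm_smul, abs_of_nonneg (by linarith), sub_mul, one_mul, hc,
          div_mul_cancel₀ _ (ne_of_gt hvpos)]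
      have hbound : l2norm (B *ᵥ w - u) ≤ 2 * l2norm (u - p) := by
        have h1 : l2norm (B *ᵥ w - u) ≤ l2norm (B *ᵥ w - B *ᵥ v) + l2norm (B *ᵥ v - u) := by
          rw [show B *ᵥ w - u = (B *ᵥ w - B *ᵥ v) + (B *ᵥ v - u) by abel]
          exact l2norm_triangle _ _
        have h2 : l2norm (B *ᵥ w - B *ᵥ v) = blo - l2norm v := by
          rw [← Matrix.mulVec_sub, hBiso, hwv]
        have h3 : l2norm (B *ᵥ v - u) = l2norm (u - p) := by rw [← hp, l2norm_sub_comm]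
        have h4 : blo - l2norm v ≤ l2norm (u - p) := by linarith
        linarith
      exact le_trans (csInf_le hbdd hmem) hbound
end

section
/- For all real numbers x > 0, y > 0, and z ≥ 0, if z ≤ x·log(1 + y·z) then z ≤ 3x·log(1 + x·y), where log denotes the natural logarithm. -/
/-!
After the substitution `a = x y`, `t = y z` the hypothesis reads `t ≤ a log (1 + t)`, and it
suffices to show `t ≤ T := 3 a log (1 + a)`. Since `log (1 + a) ≤ a` we have
`1 + T ≤ (1 + a) ^ 3`, hence `a log (1 + T) ≤ T`; and `a < 1 + T`, so the map
`s ↦ s - a log (1 + s)`, whose slope is `1 - a / (1 + s)`, keeps increasing beyond `T`.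
-/

open Real

lemma Real.log_le_log_add_sub_div {u v : ℝ} (hu : 0 < u) (hv : 0 < v) :
    log u ≤ log v + (u - v) / v := by
  have tangent := log_le_sub_one_of_pos (div_pos hu hv)
  rw [log_div hu.ne' hv.ne', div_sub_one hv.ne'] at tangent
  linarith

lemma lt_one_add_three_mul_log_one_add {a : ℝ} (ha : 0 < a) :
    a < 1 + 3 * a * log (1 + a) := by
  have h1a : 0 < 1 + a := by linarith
  have hlog : a ≤ (1 + a) * log (1 + a) :=
    calc a = (1 + a) * (1 - (1 + a)⁻¹) := by field_simp; ring
      _ ≤ (1 + a) * log (1 + a) :=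
        mul_le_mul_of_nonneg_left (one_sub_inv_le_log_of_pos h1a) h1a.le
  nlinarith

lemma mul_log_one_add_three_mul_log_one_add_le {a : ℝ} (ha : 0 < a) :
    a * log (1 + 3 * a * log (1 + a)) ≤ 3 * a * log (1 + a) := by
  have hlog_le : log (1 + a) ≤ a := by
    linarith [log_le_sub_one_of_pos (by linarith : (0 : ℝ) < 1 + a)]
  have hcube : 1 + 3 * a * log (1 + a) ≤ (1 + a) ^ 3 :=
    calc 1 + 3 * a * log (1 + a) ≤ 1 + 3 * a * a := by gcongr
      _ ≤ (1 + a) ^ 3 := by nlinarith [pow_pos ha 3]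
  have hpos : 0 < 1 + 3 * a * log (1 + a) := by
    have := log_pos (by linarith : (1 : ℝ) < 1 + a)
    positivity
  calc a * log (1 + 3 * a * log (1 + a)) ≤ a * log ((1 + a) ^ 3) := by gcongr
    _ = 3 * a * log (1 + a) := by rw [log_pow]; push_cast; ring

lemma le_three_mul_log_one_add_of_le_mul_log_one_add {a t : ℝ} (ha : 0 < a)
    (h : t ≤ a * log (1 + t)) : t ≤ 3 * a * log (1 + a) := by
  set T := 3 * a * log (1 + a)
  by_contra! hTt
  have hT : 0 < T := by
    have := log_pos (by linarith : (1 : ℝ) < 1 + a)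
    positivity
  have tangent := log_le_log_add_sub_div (by linarith : (0 : ℝ) < 1 + t)
    (by linarith : (0 : ℝ) < 1 + T)
  rw [add_sub_add_left_eq_sub] at tangent
  have slope : a * ((t - T) / (1 + T)) < t - T := by
    rw [mul_div_assoc', div_lt_iff₀ (by linarith), mul_comm (t - T)]
    exact mul_lt_mul_of_pos_right (lt_one_add_three_mul_log_one_add ha) (sub_pos.2 hTt)
  have := mul_log_one_add_three_mul_log_one_add_le ha
  nlinarith [mul_le_mul_of_nonneg_left tangent ha.le]

theorem log_inequality_bound_general (x y z : ℝ) (hx : 0 < x) (hy : 0 < y)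
    (h : z ≤ x * Real.log (1 + y * z)) :
    z ≤ 3 * x * Real.log (1 + x * y) := by
  have hscaled : y * z ≤ x * y * log (1 + y * z) := by
    linarith [mul_le_mul_of_nonneg_left h hy.le]
  have := le_three_mul_log_one_add_of_le_mul_log_one_add (mul_pos hx hy) hscaled
  refine le_of_mul_le_mul_left ?_ hy
  linarith

/-- For reals `x > 0`, `y > 0`, `z ≥ 0`: if `z ≤ x·log(1 + y·z)` then `z ≤ 3x·log(1 + x·y)`. -/
theorem log_inequality_bound (x y z : ℝ) (hx : 0 < x) (hy : 0 < y) (hz : 0 ≤ z)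
    (h : z ≤ x * Real.log (1 + y * z)) :
    z ≤ 3 * x * Real.log (1 + x * y) :=
  log_inequality_bound_general x y z hx hy h
end

section
/- Let {x_t}_{t=1}^T be a sequence of vectors in ℝ^d with ‖x_t‖ ≤ L for all t, let λ > 0, and define V_t = λI_d + Σ_{s=1}^t x_s x_sᵀ for t = 0, 1, …, T (so V_0 = λI_d). Then Σ_{t=1}^T min{1, x_tᵀ V_{t−1}⁻¹ x_t} ≤ 2d·log(1 + L²T/(dλ)), where log denotes the natural logarithm. -/
open Matrix

/-!
By the matrix determinant lemma, `det V_t = det V_{t-1} * (1 + x_tᵀ V_{t-1}⁻¹ x_t)`, so the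
terms `log (1 + x_tᵀ V_{t-1}⁻¹ x_t)` telescope to `log det V_T - log det V_0`, and
`min 1 u ≤ 2 log (1 + u)` bounds the potential by twice this. Finally `det V_0 = λ^d`, while
AM-GM (Jensen for `log`) on the eigenvalues of `V_T` gives
`det V_T ≤ (tr V_T / d)^d ≤ (λ + L²T/d)^d`.
-/

open Finset Real

theorem Real.min_one_le_two_mul_log_one_add {u : ℝ} (hu : 0 ≤ u) :
    min 1 u ≤ 2 * log (1 + u) := by
  set y := min 1 u
  have hy0 : 0 ≤ y := le_min zero_le_one hu
  have hy1 : y ≤ 1 := min_le_left 1 u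
  have hpos : 0 < 1 + y := by linarith
  calc y ≤ 2 * (1 - (1 + y)⁻¹) := by
        rw [mul_sub, mul_one, ← div_eq_mul_inv, le_sub_iff_add_le, ← le_sub_iff_add_le',
          div_le_iff₀ hpos]
        nlinarith
    _ ≤ 2 * log (1 + y) := by gcongr; exact one_sub_inv_le_log_of_pos hpos
    _ ≤ 2 * log (1 + u) := by gcongr; exact min_le_right 1 u

theorem dotProduct_self_le_sq_of_l2norm_le {m : ℕ} {v : Fin m → ℝ} {L : ℝ} (hv : l2norm v ≤ L) :
    v ⬝ᵥ v ≤ L ^ 2 := by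
  have hsq : l2norm v ^ 2 = v ⬝ᵥ v := by
    rw [l2norm, sq_sqrt (sum_nonneg fun i _ => sq_nonneg (v i))]
    simp only [dotProduct, sq]
  rw [← hsq]
  exact pow_le_pow_left₀ (sqrt_nonneg _) hv 2

namespace Matrix

variable {n : Type*} [Fintype n] [DecidableEq n]

theorem det_add_vecMulVec {R : Type*} [CommRing R] {A : Matrix n n R} (hA : IsUnit A.det)
    (u v : n → R) : (A + vecMulVec u v).det = A.det * (1 + v ⬝ᵥ A⁻¹ *ᵥ u) := by
  rw [vecMulVec_eq Unit, det_add_replicateCol_mul_replicateRow hA, det_unique (n := Unit),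
    dotProduct_mulVec]
  simp [mul_apply, vecMul, dotProduct]

theorem PosDef.dotProduct_inv_mulVec_self_nonneg {A : Matrix n n ℝ} (hA : A.PosDef) (v : n → ℝ) :
    0 ≤ v ⬝ᵥ A⁻¹ *ᵥ v := by
  simpa using hA.inv.posSemidef.dotProduct_mulVec_nonneg v

theorem PosDef.log_det_le {A : Matrix n n ℝ} (hA : A.PosDef) :
    log A.det ≤ Fintype.card n * log (A.trace / Fintype.card n) := by
  rcases isEmpty_or_nonempty n with hn | hn
  · simp
  have hN : (0 : ℝ) < Fintype.card n := by exact_mod_cast Fintype.card_pos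
  have hμ := hA.eigenvalues_pos
  have jensen := strictConcaveOn_log_Ioi.concaveOn.le_map_sum (t := univ)
    (w := fun _ => (Fintype.card n : ℝ)⁻¹) (p := hA.isHermitian.eigenvalues)
    (fun _ _ => by positivity) (by simp [hN.ne']) (fun i _ => hμ i)
  simp only [smul_eq_mul, ← mul_sum] at jensen
  rw [hA.isHermitian.det_eq_prod_eigenvalues, hA.isHermitian.trace_eq_sum_eigenvalues]
  simp only [RCLike.ofReal_real_eq_id, id]
  rw [log_prod (fun i _ => (hμ i).ne'), div_eq_inv_mul]
  rwa [← inv_mul_le_iff₀ hN]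

theorem sum_log_one_add_eq_log_det_sub {T : ℕ} (V : ℕ → Matrix n n ℝ) (x : Fin T → n → ℝ)
    (hV : ∀ t : Fin T, (V t).PosDef)
    (hstep : ∀ t : Fin T, V (t + 1) = V t + vecMulVec (x t) (x t)) :
    ∑ t : Fin T, log (1 + x t ⬝ᵥ (V t)⁻¹ *ᵥ x t) = log (V T).det - log (V 0).det := by
  have hterm : ∀ t : Fin T,
      log (1 + x t ⬝ᵥ (V t)⁻¹ *ᵥ x t) = log (V (t + 1)).det - log (V t).det := by
    intro t
    have hq := (hV t).dotProduct_inv_mulVec_self_nonneg (x t)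
    rw [hstep, det_add_vecMulVec (hV t).det_pos.ne'.isUnit,
      log_mul (hV t).det_pos.ne' (by positivity)]
    ring
  rw [sum_congr rfl fun t _ => hterm t,
    Fin.sum_univ_eq_sum_range (fun t => log (V (t + 1)).det - log (V t).det),
    sum_range_sub (fun t => log (V t).det)]

end Matrix

/-- The paper's `V_k`; the vectors are indexed from `0`, so `x t` is the paper's `x_{t+1}`. -/
noncomputable def designMatrix {n : Type*} [Fintype n] [DecidableEq n] {T : ℕ} (lam : ℝ)
    (x : Fin T → n → ℝ) (k : ℕ) : Matrix n n ℝ :=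
  lam • 1 + ∑ s ∈ univ.filter (fun s : Fin T => (s : ℕ) < k), vecMulVec (x s) (x s)

namespace designMatrix

variable {n : Type*} [Fintype n] [DecidableEq n] {T : ℕ} {lam : ℝ} {x : Fin T → n → ℝ}

theorem posDef (hlam : 0 < lam) (k : ℕ) : (designMatrix lam x k).PosDef :=
  (PosDef.one.smul hlam).add_posSemidef
    (posSemidef_sum _ fun s _ => by simpa using posSemidef_vecMulVec_self_star (x s))

theorem succ (t : Fin T) :
    designMatrix lam x (t + 1) = designMatrix lam x t + vecMulVec (x t) (x t) := by
  have hins : univ.filter (fun s : Fin T => (s : ℕ) < t + 1)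
      = insert t (univ.filter (fun s : Fin T => (s : ℕ) < t)) := by
    ext s
    simp only [mem_filter, mem_univ, true_and, mem_insert, Fin.ext_iff]
    omega
  rw [designMatrix, designMatrix, hins, sum_insert (by simp), add_left_comm, add_comm]

theorem zero : designMatrix lam x 0 = lam • 1 := by
  simp [designMatrix]

theorem trace_last : (designMatrix lam x T).trace = Fintype.card n * lam + ∑ t, x t ⬝ᵥ x t := by
  simp [designMatrix, trace_sum, mul_comm]

theorem log_det_last_sub_log_det_zero_le (hlam : 0 < lam) {L : ℝ}
    (hx : ∀ t, x t ⬝ᵥ x t ≤ L ^ 2) :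
    log (designMatrix lam x T).det - log (designMatrix lam x 0).det
      ≤ Fintype.card n * log (1 + L ^ 2 * T / (Fintype.card n * lam)) := by
  rcases isEmpty_or_nonempty n with hn | hn
  · simp
  have hN : (0 : ℝ) < Fintype.card n := by exact_mod_cast Fintype.card_pos
  set N : ℝ := (Fintype.card n : ℝ)
  have hsum : ∑ t, x t ⬝ᵥ x t ≤ L ^ 2 * T := by
    simpa [mul_comm] using sum_le_sum fun t (_ : t ∈ univ) => hx t
  have hsum0 : 0 ≤ ∑ t, x t ⬝ᵥ x t :=
    sum_nonneg fun t _ => by simpa using dotProduct_star_self_nonneg (x t)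
  have htrace : (designMatrix lam x T).trace / N ≤ lam * (1 + L ^ 2 * T / (N * lam)) := by
    rw [trace_last, div_le_iff₀ hN]
    field_simp
    linarith
  have htrace_pos : 0 < (designMatrix lam x T).trace / N := by
    rw [trace_last]; positivity
  have hlog_zero : log (designMatrix lam x 0).det = N * log lam := by
    rw [zero, det_smul, det_one, mul_one, log_pow]
  calc log (designMatrix lam x T).det - log (designMatrix lam x 0).det
      ≤ N * log ((designMatrix lam x T).trace / N) - N * log lam := by
        rw [hlog_zero]; gcongr; exact (posDef hlam T).log_det_le
    _ ≤ N * log (lam * (1 + L ^ 2 * T / (N * lam))) - N * log lam := by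
        gcongr
    _ = N * log (1 + L ^ 2 * T / (N * lam)) := by
        rw [log_mul hlam.ne' (by positivity)]; ring

end designMatrix

/-- Elliptical potential lemma: if `‖x_t‖ ≤ L` for all `t`, `λ > 0`, and
`V_t = λ I_d + ∑_{s ≤ t} x_s x_sᵀ`, then
`∑_{t=1}^T min{1, x_tᵀ V_{t-1}⁻¹ x_t} ≤ 2 d log(1 + L²T/(dλ))`. -/
theorem elliptical_potential (d T : ℕ) (L lam : ℝ) (hlam : 0 < lam)
    (x : Fin T → Fin d → ℝ) (hx : ∀ t, l2norm (x t) ≤ L) :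
    ∑ t : Fin T,
        min 1
          (x t ⬝ᵥ
            ((lam • (1 : Matrix (Fin d) (Fin d) ℝ) +
                ∑ s ∈ Finset.univ.filter (fun s : Fin T => s < t),
                  vecMulVec (x s) (x s))⁻¹ *ᵥ x t))
      ≤ 2 * d * Real.log (1 + L ^ 2 * T / (d * lam)) := by
  have hbound := designMatrix.log_det_last_sub_log_det_zero_le hlam
    fun t => dotProduct_self_le_sq_of_l2norm_le (hx t)
  rw [Fintype.card_fin] at hbound
  calc ∑ t : Fin T, min 1 (x t ⬝ᵥ (designMatrix lam x t)⁻¹ *ᵥ x t)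
      ≤ 2 * ∑ t : Fin T, log (1 + x t ⬝ᵥ (designMatrix lam x t)⁻¹ *ᵥ x t) := by
        rw [mul_sum]
        exact sum_le_sum fun t _ => min_one_le_two_mul_log_one_add
          ((designMatrix.posDef hlam t).dotProduct_inv_mulVec_self_nonneg (x t))
    _ = 2 * (log (designMatrix lam x T).det - log (designMatrix lam x 0).det) := by
        rw [sum_log_one_add_eq_log_det_sub _ x (fun t => designMatrix.posDef hlam t)
          designMatrix.succ]
    _ ≤ 2 * d * log (1 + L ^ 2 * T / (d * lam)) := by
        rw [mul_assoc]; gcongr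
end

section
/- Let d > k ≥ 1 and ε ∈ (0, 1/2]. Then there exist matrices B, B' ∈ ℝ^{d×k} with BᵀB = B'ᵀB' = I_k such that, writing e₁ for the first standard basis vector of ℝ^k and θ(u, v) = arccos(⟨u, v⟩/(‖u‖·‖v‖)) for the angle between nonzero vectors u, v ∈ ℝ^d: (i) θ(B'e₁, Be₁)/π ≤ ε, but (ii) for every w' ∈ ℝ^k with ‖w'‖ = 1, θ(B'w', Be₁)/π > ε/2. -/
open Matrix

noncomputable def vecAngle {d : ℕ} (u v : Fin d → ℝ) : ℝ :=
  Real.arccos ((u ⬝ᵥ v) / (l2norm u * l2norm v))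

lemma l2norm_mulVec {d k : ℕ} (M : Matrix (Fin d) (Fin k) ℝ) (h : Mᵀ * M = 1)
    (v : Fin k → ℝ) : l2norm (M *ᵥ v) = l2norm v := by
  rw [l2norm_eq_sqrt_dot, l2norm_eq_sqrt_dot v, dotProduct_mulVec,
    ← mulVec_transpose, mulVec_mulVec, h, one_mulVec]

lemma sum_delta' {d : ℕ} (n : ℕ) (hn : n < d) (f : Fin d → ℝ) :
    ∑ i : Fin d, (if (i : ℕ) = n then f i else 0) = f ⟨n, hn⟩ := by
  have : ∀ i : Fin d, ((i : ℕ) = n) = (i = ⟨n, hn⟩) := by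
    intro i; simp [Fin.ext_iff]
  simp_rw [this]
  rw [Finset.sum_ite_eq' Finset.univ]
  simp

lemma arccos_le_arccos' {x y : ℝ} (h : x ≤ y) : Real.arccos y ≤ Real.arccos x := by
  unfold Real.arccos
  have := Real.monotone_arcsin h
  linarith

/-- For `d > k ≥ 1` and `ε ∈ (0, 1/2]` there are semi-orthogonal `B, B' ∈ ℝ^{d×k}` such that
`θ(B'e₁, Be₁)/π ≤ ε` while for every unit `w' ∈ ℝ^k`, `θ(B'w', Be₁)/π > ε/2`. -/
theorem pointwise_independence_counterexample (d k : ℕ) (hk : 1 ≤ k) (hdk : k < d)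
    (ε : ℝ) (hε0 : 0 < ε) (hε : ε ≤ 1 / 2) :
    ∃ B B' : Matrix (Fin d) (Fin k) ℝ,
      Bᵀ * B = 1 ∧ B'ᵀ * B' = 1 ∧
      vecAngle (B' *ᵥ Pi.single (⟨0, hk⟩ : Fin k) (1 : ℝ))
          (B *ᵥ Pi.single (⟨0, hk⟩ : Fin k) (1 : ℝ)) / Real.pi ≤ ε ∧
      ∀ w' : Fin k → ℝ, l2norm w' = 1 →
        ε / 2 < vecAngle (B' *ᵥ w') (B *ᵥ Pi.single (⟨0, hk⟩ : Fin k) (1 : ℝ)) / Real.pi := by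
  have hπ : (0 : ℝ) < Real.pi := Real.pi_pos
  set α : ℝ := ε * Real.pi with hαdef
  have hα0 : 0 < α := mul_pos hε0 hπ
  have hαle : α ≤ Real.pi / 2 := by
    rw [hαdef]; nlinarith
  have hαpi : α ≤ Real.pi := by linarith
  have hcos0 : 0 ≤ Real.cos α := Real.cos_nonneg_of_mem_Icc ⟨by linarith, hαle⟩
  set j0 : Fin k := ⟨0, hk⟩ with hj0
  have h0d : 0 < d := lt_of_le_of_lt (Nat.zero_le k) hdk
  set B : Matrix (Fin d) (Fin k) ℝ :=
    Matrix.of fun i j => if (i : ℕ) = (j : ℕ) then (1 : ℝ) else 0 with hBdef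
  set B' : Matrix (Fin d) (Fin k) ℝ :=
    Matrix.of fun i j =>
      if (j : ℕ) = 0 then
        (if (i : ℕ) = 0 then Real.cos α else if (i : ℕ) = k then Real.sin α else 0)
      else (if (i : ℕ) = (j : ℕ) then (1 : ℝ) else 0) with hB'def
  -- B is semi-orthogonal
  have hB : Bᵀ * B = 1 := by
    ext j j'
    rw [Matrix.mul_apply]
    simp only [transpose_apply, hBdef, Matrix.of_apply]
    have hrw : ∀ i : Fin d,
        (if (i : ℕ) = (j : ℕ) then (1:ℝ) else 0) * (if (i : ℕ) = (j' : ℕ) then (1:ℝ) else 0)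
        = (if (i : ℕ) = (j : ℕ) then (if (i : ℕ) = (j' : ℕ) then (1:ℝ) else 0) else 0) := by
      intro i; by_cases h1 : (i : ℕ) = (j : ℕ) <;> simp [h1]
    rw [Finset.sum_congr rfl (fun i _ => hrw i), sum_delta' (j : ℕ) (j.2.trans hdk)]
    simp [Matrix.one_apply, Fin.ext_iff, eq_comm]
  -- B' is semi-orthogonal
  have hB' : B'ᵀ * B' = 1 := by
    ext j j'
    rw [Matrix.mul_apply]
    simp only [transpose_apply, hB'def, Matrix.of_apply]
    by_cases hj : (j : ℕ) = 0 <;> by_cases hj' : (j' : ℕ) = 0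
    · -- both column 0 : cos² + sin² = 1
      have hjj' : j = j' := Fin.ext (by omega)
      simp only [if_pos hj, if_pos hj']
      have hrw : ∀ i : Fin d,
          (if (i : ℕ) = 0 then Real.cos α else if (i : ℕ) = k then Real.sin α else 0) *
          (if (i : ℕ) = 0 then Real.cos α else if (i : ℕ) = k then Real.sin α else 0)
          = (if (i : ℕ) = 0 then Real.cos α * Real.cos α else 0)
            + (if (i : ℕ) = k then Real.sin α * Real.sin α else 0) := by
        intro i
        have hk0 : ¬ ((0:ℕ) = k) := by omega
        have hk0' : ¬ (k = 0) := by omega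
        by_cases h1 : (i : ℕ) = 0
        · have h2 : (i : ℕ) ≠ k := by omega
          simp [h1, h2, hk0, hk0']
        · by_cases h2 : (i : ℕ) = k <;> simp [h1, h2, hk0, hk0']
      rw [Finset.sum_congr rfl (fun i _ => hrw i), Finset.sum_add_distrib,
        sum_delta' 0 h0d, sum_delta' k hdk]
      have htrig := Real.sin_sq_add_cos_sq α
      have hone : (1 : Matrix (Fin k) (Fin k) ℝ) j j' = 1 := by
        rw [hjj', Matrix.one_apply_eq]
      rw [hone]
      have hk0'' : ¬ (k = 0) := by omega
      nlinarith [Real.sin_sq_add_cos_sq α]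
    · -- j = 0, j' ≠ 0 : orthogonal
      simp only [if_pos hj, if_neg hj']
      have hrw : ∀ i : Fin d,
          (if (i : ℕ) = 0 then Real.cos α else if (i : ℕ) = k then Real.sin α else 0) *
          (if (i : ℕ) = (j' : ℕ) then (1:ℝ) else 0) = 0 := by
        intro i
        have hj'k : (j' : ℕ) < k := j'.2
        by_cases h1 : (i : ℕ) = 0
        · have h3 : ¬ ((0:ℕ) = (j' : ℕ)) := by omega
          simp [h1, h3]
        · by_cases h2 : (i : ℕ) = k
          · have h3 : ¬ (k = (j' : ℕ)) := by omega
            have h4 : ¬ (k = 0) := by omega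
            simp [h2, h3, h4]
          · simp [h1, h2]
      rw [Finset.sum_congr rfl (fun i _ => hrw i), Finset.sum_const_zero]
      have hne : j ≠ j' := by intro h; rw [h] at hj; exact hj' hj
      simp [Matrix.one_apply, hne]
    · -- j ≠ 0, j' = 0
      simp only [if_neg hj, if_pos hj']
      have hrw : ∀ i : Fin d,
          (if (i : ℕ) = (j : ℕ) then (1:ℝ) else 0) *
          (if (i : ℕ) = 0 then Real.cos α else if (i : ℕ) = k then Real.sin α else 0) = 0 := by
        intro i
        have hjk : (j : ℕ) < k := j.2
        by_cases h3 : (i : ℕ) = (j : ℕ)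
        · have h1 : ¬ ((j : ℕ) = 0) := hj
          have h2 : ¬ ((j : ℕ) = k) := by omega
          simp [h3, h1, h2]
        · simp [h3]
      rw [Finset.sum_congr rfl (fun i _ => hrw i), Finset.sum_const_zero]
      have hne : j ≠ j' := by intro h; rw [h] at hj; exact hj hj'
      simp [Matrix.one_apply, hne]
    · -- both ≠ 0 : delta
      simp only [if_neg hj, if_neg hj']
      have hrw : ∀ i : Fin d,
          (if (i : ℕ) = (j : ℕ) then (1:ℝ) else 0) * (if (i : ℕ) = (j' : ℕ) then (1:ℝ) else 0)
          = (if (i : ℕ) = (j : ℕ) then (if (i : ℕ) = (j' : ℕ) then (1:ℝ) else 0) else 0) := by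
        intro i; by_cases h1 : (i : ℕ) = (j : ℕ) <;> simp [h1]
      rw [Finset.sum_congr rfl (fun i _ => hrw i), sum_delta' (j : ℕ) (j.2.trans hdk)]
      simp [Matrix.one_apply, Fin.ext_iff, eq_comm]
  -- B e₁ is the first standard basis vector of ℝ^d
  have hBe : B *ᵥ Pi.single j0 (1 : ℝ) = fun i : Fin d => if (i : ℕ) = 0 then (1 : ℝ) else 0 := by
    funext i
    rw [mulVec, dotProduct]
    have hrw : ∀ j : Fin k, B i j * (Pi.single j0 (1 : ℝ) : Fin k → ℝ) j = if j = j0 then B i j else 0 := by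
      intro j; rcases eq_or_ne j j0 with h | h <;> simp [h, Pi.single_apply]
    rw [Finset.sum_congr rfl (fun j _ => hrw j), Finset.sum_ite_eq' Finset.univ]
    simp [hBdef, hj0]
  -- key dot product formula
  have hdot : ∀ w' : Fin k → ℝ,
      (B' *ᵥ w') ⬝ᵥ (B *ᵥ Pi.single j0 (1 : ℝ)) = Real.cos α * w' j0 := by
    intro w'
    rw [hBe, dotProduct]
    have hrw : ∀ i : Fin d, (B' *ᵥ w') i * (if (i : ℕ) = 0 then (1:ℝ) else 0)
        = if (i : ℕ) = 0 then (B' *ᵥ w') i else 0 := by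
      intro i; by_cases h : (i : ℕ) = 0 <;> simp [h]
    rw [Finset.sum_congr rfl (fun i _ => hrw i), sum_delta' 0 h0d]
    rw [mulVec, dotProduct]
    have hrw2 : ∀ j : Fin k, B' (⟨0, h0d⟩ : Fin d) j * w' j
        = if (j : ℕ) = 0 then Real.cos α * w' j else 0 := by
      intro j; by_cases h : (j : ℕ) = 0 <;> simp [hB'def, h, eq_comm]
    rw [Finset.sum_congr rfl (fun j _ => hrw2 j), sum_delta' 0 hk]
  -- norm of e₁
  have hes : l2norm (Pi.single j0 (1 : ℝ)) = 1 := by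
    rw [l2norm]
    have hrw : ∀ j : Fin k, ((Pi.single j0 (1 : ℝ) : Fin k → ℝ) j) ^ 2 = if j = j0 then (1:ℝ) else 0 := by
      intro j; rcases eq_or_ne j j0 with h | h <;> simp [h, Pi.single_apply]
    rw [Finset.sum_congr rfl (fun j _ => hrw j), Finset.sum_ite_eq' Finset.univ]
    simp
  have hnB : l2norm (B *ᵥ Pi.single j0 (1 : ℝ)) = 1 := by
    rw [l2norm_mulVec B hB, hes]
  -- the angle formula
  have hangle : ∀ w' : Fin k → ℝ, l2norm w' = 1 →
      vecAngle (B' *ᵥ w') (B *ᵥ Pi.single j0 (1 : ℝ)) = Real.arccos (Real.cos α * w' j0) := by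
    intro w' hw'
    rw [vecAngle, hdot, l2norm_mulVec B' hB', hw', hnB]
    norm_num
  -- bound on coordinates of a unit vector
  have hcoord : ∀ w' : Fin k → ℝ, l2norm w' = 1 → |w' j0| ≤ 1 := by
    intro w' hw'
    have hsum : ∑ j, w' j ^ 2 = 1 := by
      have h2 : (0:ℝ) ≤ ∑ j, w' j ^ 2 := Finset.sum_nonneg fun j _ => sq_nonneg _
      have h1 : Real.sqrt (∑ j, w' j ^ 2) = 1 := hw'
      nlinarith [Real.sq_sqrt h2]
    have hle : w' j0 ^ 2 ≤ 1 := by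
      rw [← hsum]
      exact Finset.single_le_sum (f := fun j => w' j ^ 2) (fun j _ => sq_nonneg _)
        (Finset.mem_univ j0)
    rw [abs_le]; constructor <;> nlinarith
  refine ⟨B, B', hB, hB', ?_, ?_⟩
  · -- condition (i)
    rw [hangle _ hes]
    have hsingle : (Pi.single j0 (1:ℝ) : Fin k → ℝ) j0 = 1 := by simp
    rw [hsingle, mul_one, Real.arccos_cos (le_of_lt hα0) hαpi, hαdef,
      mul_div_assoc, div_self hπ.ne', mul_one]
  · -- condition (ii)
    intro w' hw'
    rw [hangle _ hw']
    have habs := hcoord w' hw'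
    have h1 : Real.cos α * w' j0 ≤ Real.cos α :=
      mul_le_of_le_one_right hcos0 (abs_le.mp habs).2
    have h2 : α ≤ Real.arccos (Real.cos α * w' j0) := by
      calc α = Real.arccos (Real.cos α) := (Real.arccos_cos (le_of_lt hα0) hαpi).symm
        _ ≤ _ := arccos_le_arccos' h1
    rw [lt_div_iff₀ hπ]
    have h3 : ε / 2 * Real.pi < α := by
      rw [hαdef]
      exact mul_lt_mul_of_pos_right (by linarith) hπ
    exact lt_of_lt_of_le h3 h2
end
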